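/- arXiv:1409.3760 — 5 statements merged into one kernel-verified Lean document; each statement's English description precedes it below -/
import Mathlib

section
/- Let M be a complex n×n matrix with singular values m_1 ≤ … ≤ m_n. For any choice of p rows i_1,…,i_p and p columns j_1,…,j_p, the absolute value of the determinant of the corresponding p×p submatrix is bounded by the product of the p largest singular values: |det M_{[i_1…i_p][j_1…j_p]}| ≤ m_n · m_{n-1} ⋯ m_{n-p+1}. -/
open Matrix

open Polynomial in
/-- `m` is the (increasingly ordered) tuple of singular values of `M`. -/
def IsSingularValues {n : ℕ} (M : Matrix (Fin n) (Fin n) ℂ) (m : Fin n → ℝ) : Prop :=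
  (∀ i, 0 ≤ m i) ∧ Monotone m ∧
    (Mᴴ * M).charpoly = ∏ i : Fin n, (X - C ((m i : ℂ) ^ 2))

/-!
Let `B` be the columns `c` of `M`. By Cauchy–Binet, `det (Bᴴ B)` is the sum of `|det|²` over the
maximal minors of `B`, so it dominates `|det M_{rc}|²`. Diagonalising `Mᴴ M = U Λ U*` gives
`Bᴴ B = Wᴴ Λ W`, where `W` (the columns `c` of `U*`) has orthonormal columns. Cauchy–Binet again
writes `det (Wᴴ Λ W)` as an average of products of `p` distinct eigenvalues `m_i²`, with weights
`|det W_g|²` summing to `det (Wᴴ W) = 1`; each such product is at most that of the `p` largest.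
-/

open Finset

section CauchyBinet

variable {R : Type*} [CommRing R]

theorem Matrix.det_mul_eq_sum_det_submatrix_mul_prod {m n : Type*} [Fintype m] [DecidableEq m]
    [Fintype n] (A : Matrix m n R) (B : Matrix n m R) :
    (A * B).det = ∑ f : m → n, (A.submatrix id f).det * ∏ i, B (f i) i := by
  simp only [det_apply', mul_apply, prod_univ_sum, Fintype.piFinset_univ, mul_sum, sum_mul]
  rw [sum_comm]
  refine sum_congr rfl fun f _ => sum_congr rfl fun σ _ => ?_
  simp only [submatrix_apply, id_eq, prod_mul_distrib, mul_assoc]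

theorem Matrix.det_submatrix_id_eq_zero_of_not_injective {m n : Type*} [Fintype m]
    [DecidableEq m] (A : Matrix m n R) {f : m → n} (hf : ¬ Function.Injective f) :
    (A.submatrix id f).det = 0 := by
  obtain ⟨i, j, hij, hne⟩ := Function.not_injective_iff.mp hf
  exact det_zero_of_column_eq hne fun k => by simp [hij]

variable {α : Type*} [LinearOrder α] {p : ℕ}

theorem Function.Injective.exists_orderEmbedding_comp_perm {f : Fin p → α}
    (hf : Function.Injective f) : ∃ (g : Fin p ↪o α) (σ : Equiv.Perm (Fin p)), f = g ∘ σ :=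
  ⟨OrderEmbedding.ofStrictMono _ ((Tuple.monotone_sort f).strictMono_of_injective
    (hf.comp (Tuple.sort f).injective)), (Tuple.sort f).symm, by ext; simp⟩

theorem OrderEmbedding.comp_perm_injective :
    Function.Injective fun x : (Fin p ↪o α) × Equiv.Perm (Fin p) => ⇑x.1 ∘ ⇑x.2 := by
  rintro ⟨g, σ⟩ ⟨g', σ'⟩ h
  dsimp only at h
  have hσ : (⇑g ∘ ⇑σ) ∘ ⇑σ.symm = g := by ext; simp
  have hσ' : (⇑g ∘ ⇑σ) ∘ ⇑σ'.symm = g' := by rw [h]; ext; simp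
  have hgg' : g = g' := by
    refine DFunLike.coe_injective ?_
    rw [← hσ, ← hσ']
    exact Tuple.unique_monotone (by rw [hσ]; exact g.monotone) (by rw [hσ']; exact g'.monotone)
  subst hgg'
  exact Prod.ext rfl (Equiv.ext fun i => g.injective (congrFun h i))

/-- The Cauchy–Binet formula. -/
theorem Matrix.det_mul_eq_sum_orderEmbedding {n : ℕ} (A : Matrix (Fin p) (Fin n) R)
    (B : Matrix (Fin n) (Fin p) R) :
    (A * B).det = ∑ g : Fin p ↪o Fin n, (A.submatrix id g).det * (B.submatrix g id).det := by
  calc (A * B).det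
      = ∑ f with Function.Injective f, (A.submatrix id f).det * ∏ i, B (f i) i := by
        rw [det_mul_eq_sum_det_submatrix_mul_prod]
        exact (sum_subset (filter_subset _ _) fun f _ hf => by
          rw [det_submatrix_id_eq_zero_of_not_injective A (by simpa using hf), zero_mul]).symm
    _ = ∑ x : (Fin p ↪o Fin n) × Equiv.Perm (Fin p),
          (A.submatrix id (x.1 ∘ x.2)).det * ∏ i, B (x.1 (x.2 i)) i := by
        refine (sum_nbij (fun x : (Fin p ↪o Fin n) × Equiv.Perm (Fin p) => ⇑x.1 ∘ ⇑x.2)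
          (fun x _ => ?_) OrderEmbedding.comp_perm_injective.injOn (fun f hf => ?_)
          fun _ _ => rfl).symm
        · simpa using x.1.injective.comp x.2.injective
        · obtain ⟨g, σ, rfl⟩ :=
            (by simpa using hf : Function.Injective f).exists_orderEmbedding_comp_perm
          exact ⟨(g, σ), mem_coe.mpr (mem_univ _), rfl⟩
    _ = _ := by
        rw [Fintype.sum_prod_type]
        refine sum_congr rfl fun g _ => ?_
        rw [det_apply' (B.submatrix g id), mul_sum]
        refine sum_congr rfl fun σ _ => ?_
        rw [show A.submatrix id (⇑g ∘ ⇑σ) = (A.submatrix id g).submatrix id σ from rfl,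
          det_permute']
        simp only [submatrix_apply, id_eq]
        ring

end CauchyBinet

section Gram

variable {𝕜 : Type*} [RCLike 𝕜] {n p : ℕ}

theorem Matrix.det_conjTranspose_mul_diagonal_mul (W : Matrix (Fin n) (Fin p) 𝕜) (d : Fin n → ℝ) :
    (Wᴴ * diagonal (fun i => (d i : 𝕜)) * W).det =
      ((∑ g : Fin p ↪o Fin n, (∏ a, d (g a)) * ‖(W.submatrix g id).det‖ ^ 2 : ℝ) : 𝕜) := by
  rw [det_mul_eq_sum_orderEmbedding]
  push_cast
  refine sum_congr rfl fun g _ => ?_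
  have hsub : (Wᴴ * diagonal (fun i => (d i : 𝕜))).submatrix id g =
      (W.submatrix g id)ᴴ * diagonal (fun a => (d (g a) : 𝕜)) := by
    ext; simp [mul_diagonal]
  rw [hsub, det_mul, det_diagonal, det_conjTranspose, ← RCLike.conj_mul]
  simp only [RCLike.star_def]
  ring

theorem Matrix.det_conjTranspose_mul_self (W : Matrix (Fin n) (Fin p) 𝕜) :
    (Wᴴ * W).det = ((∑ g : Fin p ↪o Fin n, ‖(W.submatrix g id).det‖ ^ 2 : ℝ) : 𝕜) := by
  simpa using W.det_conjTranspose_mul_diagonal_mul 1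

theorem Matrix.norm_det_submatrix_sq_le_re_det (B : Matrix (Fin n) (Fin p) 𝕜) {r : Fin p → Fin n}
    (hr : Function.Injective r) :
    ‖(B.submatrix r id).det‖ ^ 2 ≤ RCLike.re (Bᴴ * B).det := by
  obtain ⟨g, σ, rfl⟩ := hr.exists_orderEmbedding_comp_perm
  have hperm : ‖(B.submatrix (g ∘ σ) id).det‖ = ‖(B.submatrix g id).det‖ := by
    rw [show B.submatrix (g ∘ σ) id = (B.submatrix g id).submatrix σ id from rfl, det_permute]
    rcases Int.units_eq_one_or (Equiv.Perm.sign σ) with h | h <;> simp [h]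
  rw [hperm, det_conjTranspose_mul_self, RCLike.ofReal_re]
  exact single_le_sum (f := fun g : Fin p ↪o Fin n => ‖(B.submatrix g id).det‖ ^ 2)
    (fun _ _ => sq_nonneg _) (mem_univ g)

theorem Matrix.re_det_conjTranspose_mul_diagonal_mul_le {W : Matrix (Fin n) (Fin p) 𝕜}
    (hW : Wᴴ * W = 1) (d : Fin n → ℝ) {t : ℝ} (ht : ∀ g : Fin p ↪o Fin n, ∏ a, d (g a) ≤ t) :
    RCLike.re (Wᴴ * diagonal (fun i => (d i : 𝕜)) * W).det ≤ t := by
  have hsum : ∑ g : Fin p ↪o Fin n, ‖(W.submatrix g id).det‖ ^ 2 = 1 := by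
    have h := W.det_conjTranspose_mul_self
    rw [hW, det_one] at h
    exact_mod_cast h.symm
  rw [det_conjTranspose_mul_diagonal_mul, RCLike.ofReal_re]
  calc ∑ g : Fin p ↪o Fin n, (∏ a, d (g a)) * ‖(W.submatrix g id).det‖ ^ 2
      ≤ ∑ g : Fin p ↪o Fin n, t * ‖(W.submatrix g id).det‖ ^ 2 :=
        sum_le_sum fun g _ => mul_le_mul_of_nonneg_right (ht g) (sq_nonneg _)
    _ = t := by rw [← mul_sum, hsum, mul_one]

end Gram

theorem Matrix.IsHermitian.exists_submatrix_eq_conjTranspose_mul_diagonal_mul {𝕜 : Type*}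
    [RCLike 𝕜] {m n : Type*} [Fintype m] [DecidableEq m] [Fintype n] [DecidableEq n]
    {H : Matrix n n 𝕜} (hH : H.IsHermitian) {c : m → n} (hc : Function.Injective c) :
    ∃ W : Matrix n m 𝕜, Wᴴ * W = 1 ∧
      H.submatrix c c = Wᴴ * diagonal (fun i => (hH.eigenvalues i : 𝕜)) * W := by
  set U : Matrix n n 𝕜 := (hH.eigenvectorUnitary : Matrix n n 𝕜)
  refine ⟨(star U).submatrix id c, ?_, ?_⟩
  · rw [conjTranspose_submatrix, ← star_eq_conjTranspose, star_star,
      ← submatrix_mul _ _ _ _ _ Function.bijective_id,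
      Matrix.mem_unitaryGroup_iff.mp hH.eigenvectorUnitary.2, submatrix_one _ hc]
  · conv_lhs => rw [hH.spectral_theorem, Unitary.conjStarAlgAut_apply]
    rw [conjTranspose_submatrix, ← star_eq_conjTranspose, star_star,
      submatrix_mul _ _ _ _ _ Function.bijective_id, submatrix_mul _ _ _ _ _ Function.bijective_id,
      submatrix_id_id]
    rfl

theorem Monotone.exists_perm_eq_comp_of_map_univ_val_eq {α : Type*} [LinearOrder α] {n : ℕ}
    {f g : Fin n → α} (hg : Monotone g) (h : univ.val.map f = univ.val.map g) :
    ∃ σ : Equiv.Perm (Fin n), f = g ∘ σ := by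
  have hsort : f ∘ Tuple.sort f = g := by
    refine List.ofFn_injective
      (List.Perm.eq_of_sortedLE (Tuple.monotone_sort f).sortedLE_ofFn hg.sortedLE_ofFn ?_)
    refine ((Tuple.sort f).ofFn_comp_perm f).trans ?_
    rw [← Multiset.coe_eq_coe, ← Fin.univ_val_map, ← Fin.univ_val_map, h]
  exact ⟨(Tuple.sort f).symm, by rw [← hsort]; ext; simp⟩

theorem Monotone.prod_le_prod_Ici_of_card_eq {R α : Type*} [CommSemiring R] [PartialOrder R]
    [IsOrderedRing R] [LinearOrder α] [LocallyFiniteOrderTop α] [DecidableEq α] {μ : α → R}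
    (hμ : Monotone μ) (hμ0 : ∀ i, 0 ≤ μ i) (a : α) {s : Finset α} (hs : #s = #(Ici a)) :
    ∏ i ∈ s, μ i ≤ ∏ i ∈ Ici a, μ i := by
  have hlow : ∏ i ∈ s \ Ici a, μ i ≤ ∏ i ∈ Ici a \ s, μ i :=
    calc ∏ i ∈ s \ Ici a, μ i ≤ ∏ i ∈ s \ Ici a, μ a :=
          prod_le_prod (fun i _ => hμ0 i) fun i hi => hμ (not_le.mp (mt mem_Ici.mpr (mem_sdiff.mp hi).2)).le
      _ = ∏ i ∈ Ici a \ s, μ a := by rw [prod_const, prod_const, card_sdiff_comm hs]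
      _ ≤ ∏ i ∈ Ici a \ s, μ i :=
          prod_le_prod (fun _ _ => hμ0 a) fun i hi => hμ (mem_Ici.mp (mem_sdiff.mp hi).1)
  rw [← prod_inter_mul_prod_sdiff s (Ici a), ← prod_inter_mul_prod_sdiff (Ici a) s, inter_comm]
  exact mul_le_mul_of_nonneg_left hlow (prod_nonneg fun i _ => hμ0 i)

theorem Monotone.prod_le_prod_filter_of_card_eq {R : Type*} [CommSemiring R] [PartialOrder R]
    [IsOrderedRing R] {n p : ℕ} {μ : Fin n → R} (hμ : Monotone μ) (hμ0 : ∀ i, 0 ≤ μ i)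
    {s : Finset (Fin n)} (hs : #s = p) :
    ∏ i ∈ s, μ i ≤ ∏ i ∈ univ.filter (fun i : Fin n => n - p ≤ (i : ℕ)), μ i := by
  obtain rfl | hp := p.eq_zero_or_pos
  · rw [card_eq_zero.mp hs, Nat.sub_zero,
      filter_false_of_mem fun i _ => not_le.mpr i.isLt, prod_empty]
  · have hpn : p ≤ n := hs ▸ (card_le_univ s).trans_eq (Fintype.card_fin n)
    have hT : univ.filter (fun i : Fin n => n - p ≤ (i : ℕ)) = Ici ⟨n - p, by omega⟩ := by
      ext; simp [Fin.le_def]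
    rw [hT]
    exact hμ.prod_le_prod_Ici_of_card_eq hμ0 _ (by rw [hs, Fin.card_Ici, Fin.val_mk]; omega)

theorem IsSingularValues.monotone_sq {n : ℕ} {M : Matrix (Fin n) (Fin n) ℂ} {m : Fin n → ℝ}
    (hm : IsSingularValues M m) : Monotone fun i => m i ^ 2 :=
  fun _ _ hij => pow_le_pow_left₀ (hm.1 _) (hm.2.1 hij) 2

theorem IsSingularValues.exists_perm_eigenvalues_eq {n : ℕ} {M : Matrix (Fin n) (Fin n) ℂ}
    {m : Fin n → ℝ} (hm : IsSingularValues M m) :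
    ∃ τ : Equiv.Perm (Fin n),
      (isHermitian_conjTranspose_mul_self M).eigenvalues = (fun i => m i ^ 2) ∘ τ := by
  refine hm.monotone_sq.exists_perm_eq_comp_of_map_univ_val_eq ?_
  apply Multiset.map_injective Complex.ofReal_injective
  rw [Multiset.map_map, Multiset.map_map]
  refine (isHermitian_conjTranspose_mul_self M).roots_charpoly_eq_eigenvalues.symm.trans ?_
  rw [hm.2.2,
    Polynomial.roots_prod _ _ (prod_ne_zero_iff.mpr fun i _ => Polynomial.X_sub_C_ne_zero _)]
  simp only [Polynomial.roots_X_sub_C, Multiset.bind_singleton, Function.comp_def,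
    Complex.ofReal_pow]

theorem subdet_le_prod_largest_singular_values_general {n p : ℕ}
    (M : Matrix (Fin n) (Fin n) ℂ) (m : Fin n → ℝ) (hm : IsSingularValues M m)
    (r c : Fin p → Fin n) (hr : Function.Injective r) (hc : Function.Injective c) :
    ‖(M.submatrix r c).det‖ ≤
      ∏ i ∈ Finset.univ.filter (fun i : Fin n => n - p ≤ (i : ℕ)), m i := by
  have hH := isHermitian_conjTranspose_mul_self M
  obtain ⟨τ, hτ⟩ := hm.exists_perm_eigenvalues_eq
  obtain ⟨W, hW, hHW⟩ := hH.exists_submatrix_eq_conjTranspose_mul_diagonal_mul hc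
  have hbound (g : Fin p ↪o Fin n) : ∏ a, hH.eigenvalues (g a) ≤
      ∏ i ∈ univ.filter (fun i : Fin n => n - p ≤ (i : ℕ)), m i ^ 2 := by
    have hτg : Function.Injective (τ ∘ g) := τ.injective.comp g.injective
    rw [hτ]
    exact (prod_image (f := fun i => m i ^ 2) fun a _ b _ h => hτg h).symm.trans_le
      (hm.monotone_sq.prod_le_prod_filter_of_card_eq (fun i => sq_nonneg _)
        (by rw [card_image_of_injective _ hτg, card_univ, Fintype.card_fin]))
  have hsq : ‖(M.submatrix r c).det‖ ^ 2 ≤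
      (∏ i ∈ univ.filter (fun i : Fin n => n - p ≤ (i : ℕ)), m i) ^ 2 :=
    calc ‖(M.submatrix r c).det‖ ^ 2
        ≤ RCLike.re ((M.submatrix id c)ᴴ * M.submatrix id c).det :=
          (M.submatrix id c).norm_det_submatrix_sq_le_re_det hr
      _ ≤ _ := by
          rw [conjTranspose_submatrix, ← submatrix_mul _ _ _ _ _ Function.bijective_id, hHW]
          exact re_det_conjTranspose_mul_diagonal_mul_le hW _ hbound
      _ = _ := prod_pow _ _ _
  exact (pow_le_pow_iff_left₀ (norm_nonneg _) (prod_nonneg fun i _ => hm.1 i) two_ne_zero).mp hsq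

/-- The absolute value of the determinant of any `p × p` submatrix is bounded by the
product of the `p` largest singular values. -/
theorem subdet_le_prod_largest_singular_values {n p : ℕ} (hpn : p ≤ n)
    (M : Matrix (Fin n) (Fin n) ℂ) (m : Fin n → ℝ) (hm : IsSingularValues M m)
    (r c : Fin p → Fin n) (hr : Function.Injective r) (hc : Function.Injective c) :
    ‖(M.submatrix r c).det‖ ≤
      ∏ i ∈ Finset.univ.filter (fun i : Fin n => n - p ≤ (i : ℕ)), m i :=
  subdet_le_prod_largest_singular_values_general M m hm r c hr hc
end

section
/- Let M be a complex n×n matrix with singular values m_1, …, m_n. For each p with 1 ≤ p ≤ n, the p-th elementary symmetric polynomial in the squared singular values equals the sum over all p×p submatrices (choices of p rows with increasing indices and p columns with increasing indices) of the squared absolute values of their determinants: Σ_{i_1<…<i_p} m²_{i_1}⋯m²_{i_p} = Σ_{h_1<…<h_p, k_1<…<k_p} |det M_{[h_1…h_p][k_1…k_p]}|². -/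
open Matrix

attribute [local instance] Classical.propDecidable

/-!
The squared singular values are the roots of the characteristic polynomial of `Mᴴ * M`, so by
Vieta their `p`-th elementary symmetric function is, up to the sign `(-1) ^ p`, a coefficient of
that polynomial, i.e. the sum of the `p × p` principal minors of `Mᴴ * M`. The principal minor on
the columns `c` is the Gram determinant `det (Nᴴ * N)` of the `n × p` matrix `N = M.submatrix id c`,
and the Cauchy–Binet formula expands it as `∑ r, |det (M.submatrix r c)| ^ 2`.
-/

open Polynomial Finset

theorem Finset.prod_X_sub_C_coeff {R σ : Type*} [CommRing R] (s : Finset σ) (r : σ → R) {k : ℕ}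
    (h : k ≤ #s) :
    (∏ i ∈ s, (X - C (r i))).coeff (#s - k) =
      (-1) ^ k * ∑ t ∈ s.powersetCard k, ∏ i ∈ t, r i := by
  have hvieta := Multiset.prod_X_sub_C_coeff (s.val.map r) (k := #s - k) (by simp)
  simp only [Multiset.map_map, Function.comp_def, Multiset.card_map, card_val,
    Nat.sub_sub_self h, Finset.esymm_map_val] at hvieta
  rw [Finset.prod_eq_multiset_prod, hvieta]

theorem Matrix.esymm_eq_sum_principal_minors_of_charpoly_eq {R ι : Type*} [CommRing R]
    [Fintype ι] [DecidableEq ι] (A : Matrix ι ι R) (μ : ι → R)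
    (hA : A.charpoly = ∏ i, (X - C (μ i))) {k : ℕ} (hk : k ≤ Fintype.card ι) :
    ∑ t ∈ univ.powersetCard k, ∏ i ∈ t, μ i =
      ∑ s ∈ univ.powersetCard k, (A.submatrix (Subtype.val : s → ι) Subtype.val).det := by
  have h := A.charpoly_coeff_eq_sum_minors k hk
  rw [hA, ← Finset.card_univ, Finset.prod_X_sub_C_coeff _ _ (by simpa using hk)] at h
  exact (isUnit_neg_one.pow k).mul_right_inj.mp h

section

variable {R ι : Type*} [CommRing R]

section

variable {κ : Type*} [Fintype κ] [DecidableEq κ]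

theorem Matrix.det_mul_eq_sum_prod_mul_det_submatrix [Fintype ι] (A : Matrix κ ι R)
    (B : Matrix ι κ R) :
    (A * B).det = ∑ φ : κ → ι, (∏ i, A i (φ i)) * (B.submatrix φ id).det := by
  have hrows : A * B = fun i => ∑ k, A i k • B k := by
    ext i j
    simp [mul_apply, Finset.sum_apply]
  rw [det, hrows, ← AlternatingMap.coe_multilinearMap, MultilinearMap.map_sum]
  refine Finset.sum_congr rfl fun φ _ => ?_
  rw [AlternatingMap.coe_multilinearMap, AlternatingMap.map_smul_univ]
  rfl

theorem Matrix.det_submatrix_eq_zero_of_not_injective (B : Matrix ι κ R) {φ : κ → ι}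
    (hφ : ¬ Function.Injective φ) : (B.submatrix φ id).det = 0 := by
  obtain ⟨i, j, hij, hne⟩ : ∃ i j, φ i = φ j ∧ i ≠ j := by
    simpa [Function.Injective] using hφ
  exact det_zero_of_row_eq hne (by ext; simp [hij])

theorem Matrix.sum_perm_prod_mul_det_submatrix_comp (A : Matrix κ ι R) (B : Matrix ι κ R)
    (f : κ → ι) :
    ∑ σ : Equiv.Perm κ, (∏ i, A i (f (σ i))) * (B.submatrix (f ∘ σ) id).det =
      (A.submatrix id f).det * (B.submatrix f id).det := by
  simp_rw [show ∀ σ : Equiv.Perm κ, B.submatrix (f ∘ σ) id =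
    (B.submatrix f id).submatrix σ id from fun _ => rfl, det_permute]
  rw [← det_transpose (A.submatrix id f), det_apply' (A.submatrix id f)ᵀ, Finset.sum_mul]
  refine Finset.sum_congr rfl fun σ _ => ?_
  simp only [transpose_apply, submatrix_apply, id_eq]
  ring

end

variable {p : ℕ}

variable [LinearOrder ι]

theorem injective_strictMono_comp_perm :
    Function.Injective fun x : {f : Fin p → ι // StrictMono f} × Equiv.Perm (Fin p) =>
      x.1.1 ∘ x.2 := by
  rintro ⟨⟨f, hf⟩, σ⟩ ⟨⟨g, hg⟩, τ⟩ h
  obtain rfl : f = g := by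
    refine (hf.range_inj hg).mp ?_
    simpa [Set.range_comp, EquivLike.range_eq_univ] using congrArg Set.range h
  exact Prod.ext rfl (Equiv.ext fun i => hf.injective (congrFun h i))

theorem exists_strictMono_comp_perm_eq {φ : Fin p → ι} (hφ : Function.Injective φ) :
    ∃ f : {f : Fin p → ι // StrictMono f}, ∃ σ : Equiv.Perm (Fin p), f.1 ∘ σ = φ :=
  ⟨⟨φ ∘ Tuple.sort φ, (Tuple.monotone_sort φ).strictMono_of_injective
    (hφ.comp (Tuple.sort φ).injective)⟩, (Tuple.sort φ)⁻¹, by ext; simp⟩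

variable [Fintype ι] [DecidableLT ι]

/-- **Cauchy–Binet formula** -/
theorem Matrix.det_mul_eq_sum_strictMono (A : Matrix (Fin p) ι R) (B : Matrix ι (Fin p) R) :
    (A * B).det = ∑ f : {f : Fin p → ι // StrictMono f},
      (A.submatrix id f.1).det * (B.submatrix f.1 id).det := by
  calc (A * B).det
      = ∑ x : {f : Fin p → ι // StrictMono f} × Equiv.Perm (Fin p),
          (∏ i, A i (x.1.1 (x.2 i))) * (B.submatrix (x.1.1 ∘ x.2) id).det := by
        rw [det_mul_eq_sum_prod_mul_det_submatrix]
        refine (Finset.sum_of_injOn _ injective_strictMono_comp_perm.injOn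
          (by simp) (fun φ _ hφ => ?_) (fun _ _ => rfl)).symm
        refine mul_eq_zero_of_right _ (det_submatrix_eq_zero_of_not_injective B fun h => ?_)
        obtain ⟨f, σ, hfσ⟩ := exists_strictMono_comp_perm_eq h
        exact hφ ⟨(f, σ), by simp, hfσ⟩
    _ = _ := by
        rw [Fintype.sum_prod_type]
        exact Finset.sum_congr rfl fun f _ => sum_perm_prod_mul_det_submatrix_comp A B f.1

theorem Matrix.sum_principal_minors_eq_sum_strictMono [DecidableEq ι] (A : Matrix ι ι R)
    (k : ℕ) :
    ∑ s ∈ univ.powersetCard k, (A.submatrix (Subtype.val : s → ι) Subtype.val).det =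
      ∑ f : {f : Fin k → ι // StrictMono f}, (A.submatrix f.1 f.1).det := by
  refine Finset.sum_bij' (fun s hs => ⟨s.orderEmbOfFin (mem_powersetCard_univ.mp hs),
      (s.orderEmbOfFin _).strictMono⟩) (fun f _ => univ.image f.1) (by simp)
    (fun f _ => mem_powersetCard_univ.mpr ?_) (fun s hs => ?_) (fun f _ => ?_) (fun s hs => ?_)
  · rw [card_image_of_injective _ f.2.injective, card_univ, Fintype.card_fin]
  · simp [← coe_inj]
  · exact Subtype.ext (orderEmbOfFin_unique _ (by simp) f.2).symm
  · rw [← det_submatrix_equiv_self (s.orderIsoOfFin (mem_powersetCard_univ.mp hs)).toEquiv]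
    rfl

theorem Matrix.det_conjTranspose_mul_self_eq_sum_sq_norm {𝕜 : Type*} [RCLike 𝕜]
    (N : Matrix ι (Fin p) 𝕜) :
    (Nᴴ * N).det =
      ∑ r : {f : Fin p → ι // StrictMono f}, (‖(N.submatrix r.1 id).det‖ : 𝕜) ^ 2 := by
  rw [det_mul_eq_sum_strictMono]
  refine Finset.sum_congr rfl fun r _ => ?_
  rw [← conjTranspose_submatrix, det_conjTranspose, RCLike.star_def, RCLike.conj_mul]

end

theorem esymm_sq_singular_values_eq_sum_sq_subdets_general {n p : ℕ} (hpn : p ≤ n)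
    (M : Matrix (Fin n) (Fin n) ℂ) (m : Fin n → ℝ) (hm : IsSingularValues M m) :
    ∑ s ∈ Finset.powersetCard p (Finset.univ : Finset (Fin n)), ∏ i ∈ s, (m i) ^ 2 =
      ∑ r : {f : Fin p → Fin n // StrictMono f}, ∑ c : {g : Fin p → Fin n // StrictMono g},
        ‖(M.submatrix r.1 c.1).det‖ ^ 2 := by
  apply Complex.ofReal_injective
  push_cast
  rw [(Mᴴ * M).esymm_eq_sum_principal_minors_of_charpoly_eq _ hm.2.2 (by simpa using hpn),
    sum_principal_minors_eq_sum_strictMono, Finset.sum_comm]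
  refine Finset.sum_congr rfl fun c _ => ?_
  rw [submatrix_mul _ _ _ id _ Function.bijective_id, ← conjTranspose_submatrix,
    det_conjTranspose_mul_self_eq_sum_sq_norm]
  rfl

/-- The `p`-th elementary symmetric polynomial of the squared singular values equals the
sum of the squared absolute values of the determinants of all `p × p` submatrices. -/
theorem esymm_sq_singular_values_eq_sum_sq_subdets {n p : ℕ} (hp : 1 ≤ p) (hpn : p ≤ n)
    (M : Matrix (Fin n) (Fin n) ℂ) (m : Fin n → ℝ) (hm : IsSingularValues M m) :
    ∑ s ∈ Finset.powersetCard p (Finset.univ : Finset (Fin n)), ∏ i ∈ s, (m i) ^ 2 =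
      ∑ r : {f : Fin p → Fin n // StrictMono f}, ∑ c : {g : Fin p → Fin n // StrictMono g},
        ‖(M.submatrix r.1 c.1).det‖ ^ 2 :=
  esymm_sq_singular_values_eq_sum_sq_subdets_general hpn M m hm
end

section
/- Let M be a complex n×n matrix with singular values m_1 ≤ … ≤ m_n, and let N be any p×q submatrix of M (p ≤ q ≤ n) with singular values σ_1 ≤ … ≤ σ_p. Then each singular value of the submatrix is bounded by the corresponding singular value of M: σ_i ≤ m_{n-p+i} for all i = 1, …, p. -/
open Matrix

open Polynomial in
/-- `σ` is the (increasingly ordered) tuple of singular values of the rectangular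
`p × q` matrix `N` (with `p ≤ q`), i.e. the nonnegative square roots of the
eigenvalues of `N * Nᴴ`. -/
def IsSingularValuesRect {p q : ℕ} (N : Matrix (Fin p) (Fin q) ℂ) (σ : Fin p → ℝ) : Prop :=
  (∀ i, 0 ≤ σ i) ∧ Monotone σ ∧
    (N * Nᴴ).charpoly = ∏ i : Fin p, (X - C ((σ i : ℂ) ^ 2))

/-! The squares `σ i ^ 2` are the eigenvalues of `N * Nᴴ`, and the `m j ^ 2` those of `M * Mᴴ`,
which has the same characteristic polynomial as `Mᴴ * M`. Extending vectors by zero along the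
selected rows is an isometry `L`, and `⟪N Nᴴ y, y⟫ = ‖Nᴴ y‖² ≤ ‖Mᴴ (L y)‖² = ⟪M Mᴴ (L y), L y⟫`
because `Nᴴ y` is a subvector of `Mᴴ (L y)`. By the Courant–Fischer min-max principle such a
comparison of quadratic forms bounds the `k`-th largest eigenvalue of `N * Nᴴ` by the `k`-th largest
eigenvalue of `M * Mᴴ`; counted from below, this is the shift of the index by `n - p`. -/

open Polynomial Module Submodule

namespace OrthonormalBasis

variable {ι 𝕜 E : Type*} [Fintype ι] [RCLike 𝕜] [NormedAddCommGroup E] [InnerProductSpace 𝕜 E]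
  (b : OrthonormalBasis ι 𝕜 E)

theorem repr_eq_zero_of_mem_span {s : Set ι} {x : E} (hx : x ∈ span 𝕜 (b '' s)) {j : ι}
    (hj : j ∉ s) : b.repr x j = 0 := by
  rw [← OrthonormalBasis.coe_toBasis, Module.Basis.mem_span_image] at hx
  rw [← OrthonormalBasis.coe_toBasis_repr_apply]
  exact Finsupp.notMem_support_iff.mp fun h => hj (hx h)

theorem finrank_span_image (s : Finset ι) : finrank 𝕜 (span 𝕜 (b '' s)) = s.card := by
  rw [Set.image_eq_range, ← Fintype.card_coe]
  exact finrank_span_eq_card (b.orthonormal.linearIndependent.comp _ Subtype.val_injective)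

end OrthonormalBasis

namespace LinearMap.IsSymmetric

variable {𝕜 E : Type*} [RCLike 𝕜] [NormedAddCommGroup E] [InnerProductSpace 𝕜 E]
  [FiniteDimensional 𝕜 E] {T : E →ₗ[𝕜] E} (hT : T.IsSymmetric) {n : ℕ} (hn : finrank 𝕜 E = n)

theorem re_inner_apply_self_eq_sum (x : E) :
    RCLike.re (inner 𝕜 (T x) x) =
      ∑ j, hT.eigenvalues hn j * ‖(hT.eigenvectorBasis hn).repr x j‖ ^ 2 := by
  rw [← (hT.eigenvectorBasis hn).repr.inner_map_map, PiLp.inner_apply, map_sum]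
  refine Finset.sum_congr rfl fun j _ => ?_
  set c := (hT.eigenvectorBasis hn).repr x j
  have hc : c * starRingEnd 𝕜 (hT.eigenvalues hn j * c) = (hT.eigenvalues hn j * ‖c‖ ^ 2 : ℝ) := by
    rw [map_mul, RCLike.conj_ofReal, mul_left_comm, RCLike.mul_conj]
    push_cast
    ring
  rw [eigenvectorBasis_apply_self_apply, RCLike.inner_apply, hc, RCLike.ofReal_re]

theorem re_inner_apply_self_le_of_mem_span {s : Set (Fin n)} {t : ℝ}
    (ht : ∀ j ∈ s, hT.eigenvalues hn j ≤ t) {x : E}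
    (hx : x ∈ span 𝕜 (hT.eigenvectorBasis hn '' s)) :
    RCLike.re (inner 𝕜 (T x) x) ≤ t * ‖x‖ ^ 2 := by
  rw [re_inner_apply_self_eq_sum hT hn, ← (hT.eigenvectorBasis hn).repr.norm_map,
    EuclideanSpace.norm_sq_eq, Finset.mul_sum]
  refine Finset.sum_le_sum fun j _ => ?_
  by_cases hj : j ∈ s
  · exact mul_le_mul_of_nonneg_right (ht j hj) (sq_nonneg _)
  · simp [(hT.eigenvectorBasis hn).repr_eq_zero_of_mem_span hx hj]

theorem le_re_inner_apply_self_of_mem_span {s : Set (Fin n)} {t : ℝ}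
    (ht : ∀ j ∈ s, t ≤ hT.eigenvalues hn j) {x : E}
    (hx : x ∈ span 𝕜 (hT.eigenvectorBasis hn '' s)) :
    t * ‖x‖ ^ 2 ≤ RCLike.re (inner 𝕜 (T x) x) := by
  rw [re_inner_apply_self_eq_sum hT hn, ← (hT.eigenvectorBasis hn).repr.norm_map,
    EuclideanSpace.norm_sq_eq, Finset.mul_sum]
  refine Finset.sum_le_sum fun j _ => ?_
  by_cases hj : j ∈ s
  · exact mul_le_mul_of_nonneg_right (ht j hj) (sq_nonneg _)
  · simp [(hT.eigenvectorBasis hn).repr_eq_zero_of_mem_span hx hj]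

theorem exists_re_inner_apply_self_le (V : Submodule 𝕜 E) (i : Fin n)
    (hV : i < finrank 𝕜 V) :
    ∃ x ∈ V, x ≠ 0 ∧ RCLike.re (inner 𝕜 (T x) x) ≤ hT.eigenvalues hn i * ‖x‖ ^ 2 := by
  set U := span 𝕜 (hT.eigenvectorBasis hn '' ↑(Finset.Ici i))
  have hU : finrank 𝕜 U = n - i := by
    rw [OrthonormalBasis.finrank_span_image, Fin.card_Ici]
  have hVU : ¬Disjoint V U := fun h => by
    have := Submodule.finrank_add_finrank_le_of_disjoint h
    omega
  obtain ⟨x, hxV, hxU, hx0⟩ : ∃ x ∈ V, x ∈ U ∧ x ≠ 0 := by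
    simpa [Submodule.disjoint_def] using hVU
  refine ⟨x, hxV, hx0, hT.re_inner_apply_self_le_of_mem_span hn (fun j hj => ?_) hxU⟩
  exact hT.eigenvalues_antitone hn (Finset.mem_Ici.mp hj)

theorem eigenvalues_le_of_re_inner_le {F : Type*} [NormedAddCommGroup F]
    [InnerProductSpace 𝕜 F] [FiniteDimensional 𝕜 F] {S : F →ₗ[𝕜] F} (hS : S.IsSymmetric) {p : ℕ}
    (hp : finrank 𝕜 F = p) (hpn : p ≤ n) (L : F →ₗᵢ[𝕜] E)
    (hST : ∀ y, RCLike.re (inner 𝕜 (S y) y) ≤ RCLike.re (inner 𝕜 (T (L y)) (L y)))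
    (i : Fin p) : hS.eigenvalues hp i ≤ hT.eigenvalues hn (i.castLE hpn) := by
  set W := span 𝕜 (hS.eigenvectorBasis hp '' ↑(Finset.Iic i))
  have hW : finrank 𝕜 (W.map L.toLinearMap) = i + 1 := by
    rw [← (W.equivMapOfInjective _ L.injective).finrank_eq, OrthonormalBasis.finrank_span_image,
      Fin.card_Iic]
  obtain ⟨_, ⟨y, hyW, rfl⟩, hy0, hTy⟩ :=
    hT.exists_re_inner_apply_self_le hn (W.map L.toLinearMap) (i.castLE hpn) (by simp [hW])
  have hSy : hS.eigenvalues hp i * ‖y‖ ^ 2 ≤ RCLike.re (inner 𝕜 (S y) y) :=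
    hS.le_re_inner_apply_self_of_mem_span hp
      (fun j hj => hS.eigenvalues_antitone hp (Finset.mem_Iic.mp hj)) hyW
  have hy : 0 < ‖y‖ ^ 2 := by
    have : y ≠ 0 := fun h => hy0 (by simp [h])
    positivity
  rw [LinearIsometry.coe_toLinearMap, L.norm_map] at hTy
  exact le_of_mul_le_mul_right ((hSy.trans (hST y)).trans hTy) hy

theorem eigenvalues_eq_of_charpoly_eq {μ : Fin n → ℝ} (hμ : Antitone μ)
    (h : T.charpoly = ∏ i, (X - C (μ i : 𝕜))) : hT.eigenvalues hn = μ := by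
  apply List.ofFn_injective
  have hroots : T.charpoly.roots = Multiset.map (fun i => (μ i : 𝕜)) Finset.univ.val := by
    rw [h, Finset.prod_eq_multiset_prod]
    simpa [Multiset.map_map, Function.comp_def] using
      roots_multiset_prod_X_sub_C (Multiset.map (fun i => (μ i : 𝕜)) Finset.univ.val)
  rw [← hT.sort_roots_charpoly_eq_eigenvalues hn, hroots, Multiset.map_map, Fin.univ_val_map,
    Multiset.coe_sort]
  simp only [Function.comp_def, RCLike.ofReal_re]
  apply List.mergeSort_of_pairwise
  simp_rw [decide_eq_true_eq, ← List.sortedGE_iff_pairwise]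
  exact hμ.sortedGE_ofFn

end LinearMap.IsSymmetric

namespace EuclideanSpace

variable {𝕜 ι κ : Type*} [RCLike 𝕜] [Fintype ι] [Fintype κ] {r : ι → κ}

noncomputable def extendByZero (hr : Function.Injective r) :
    EuclideanSpace 𝕜 ι →ₗᵢ[𝕜] EuclideanSpace 𝕜 κ :=
  LinearMap.isometryOfInner
    ((WithLp.linearEquiv 2 𝕜 (κ → 𝕜)).symm.toLinearMap ∘ₗ Function.ExtendByZero.linearMap 𝕜 r ∘ₗ
      (WithLp.linearEquiv 2 𝕜 (ι → 𝕜)).toLinearMap)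
    fun x y => by
      simp only [PiLp.inner_apply]
      refine (Fintype.sum_of_injective r hr _ _ (fun l hl => ?_) fun i => ?_).symm
      · simp [Function.extend_apply' _ _ _ (by simpa using hl)]
      · simp [hr.extend_apply]

theorem ofLp_extendByZero (hr : Function.Injective r) (x : EuclideanSpace 𝕜 ι) :
    (extendByZero hr x).ofLp = Function.extend r x.ofLp 0 :=
  rfl

end EuclideanSpace

namespace Matrix

variable {𝕜 m k ι κ : Type*} [RCLike 𝕜]

theorem re_inner_toEuclideanLin_mul_conjTranspose_self [Fintype m] [DecidableEq m] [Fintype k]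
    (A : Matrix m k 𝕜) (y : EuclideanSpace 𝕜 m) :
    RCLike.re (inner 𝕜 (toEuclideanLin (A * Aᴴ) y) y) = ‖toEuclideanLin Aᴴ y‖ ^ 2 := by
  classical
  rw [toLpLin_mul_same, LinearMap.comp_apply, toEuclideanLin_conjTranspose_eq_adjoint,
    ← LinearMap.adjoint_inner_right, inner_self_eq_norm_sq]

theorem isSymmetric_toEuclideanLin_mul_conjTranspose_self [Fintype m] [DecidableEq m]
    [Fintype k] (A : Matrix m k 𝕜) : (toEuclideanLin (A * Aᴴ)).IsSymmetric :=
  isSymmetric_toEuclideanLin_iff.mpr (isHermitian_mul_conjTranspose_self A)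

theorem conjTranspose_submatrix_mulVec [Fintype m] [Fintype ι] (M : Matrix m k 𝕜) {r : ι → m}
    (hr : Function.Injective r) (c : κ → k) (y : ι → 𝕜) (j : κ) :
    ((M.submatrix r c)ᴴ *ᵥ y) j = (Mᴴ *ᵥ Function.extend r y 0) (c j) := by
  simp only [mulVec, dotProduct]
  refine Fintype.sum_of_injective r hr _ _ (fun l hl => ?_) fun i => ?_
  · simp [Function.extend_apply' _ _ _ (by simpa using hl)]
  · simp [hr.extend_apply]

theorem re_inner_submatrix_mul_conjTranspose_le [Fintype m] [DecidableEq m] [Fintype k]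
    [Fintype ι] [DecidableEq ι] [Fintype κ]
    (M : Matrix m k 𝕜) {r : ι → m} (hr : Function.Injective r) {c : κ → k}
    (hc : Function.Injective c) (y : EuclideanSpace 𝕜 ι) :
    RCLike.re (inner 𝕜 (toEuclideanLin (M.submatrix r c * (M.submatrix r c)ᴴ) y) y) ≤
      RCLike.re (inner 𝕜 (toEuclideanLin (M * Mᴴ) (EuclideanSpace.extendByZero hr y))
        (EuclideanSpace.extendByZero hr y)) := by
  rw [re_inner_toEuclideanLin_mul_conjTranspose_self,
    re_inner_toEuclideanLin_mul_conjTranspose_self, EuclideanSpace.norm_sq_eq,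
    EuclideanSpace.norm_sq_eq]
  simp only [ofLp_toLpLin, toLin'_apply, conjTranspose_submatrix_mulVec M hr,
    EuclideanSpace.ofLp_extendByZero]
  calc ∑ j, ‖(Mᴴ *ᵥ Function.extend r y.ofLp 0) (c j)‖ ^ 2
      = ∑ l ∈ Finset.univ.map ⟨c, hc⟩, ‖(Mᴴ *ᵥ Function.extend r y.ofLp 0) l‖ ^ 2 := by
        rw [Finset.sum_map]; rfl
    _ ≤ _ := Finset.sum_le_univ_sum_of_nonneg fun _ => sq_nonneg _

end Matrix

theorem IsSingularValues.isSingularValuesRect {n : ℕ} {M : Matrix (Fin n) (Fin n) ℂ}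
    {m : Fin n → ℝ} (hm : IsSingularValues M m) : IsSingularValuesRect M m :=
  ⟨hm.1, hm.2.1, by rw [charpoly_mul_comm]; exact hm.2.2⟩

theorem IsSingularValuesRect.sq_eq_eigenvalues_rev {p q : ℕ} {N : Matrix (Fin p) (Fin q) ℂ}
    {σ : Fin p → ℝ} (hσ : IsSingularValuesRect N σ) (i : Fin p) :
    σ i ^ 2 = (isSymmetric_toEuclideanLin_mul_conjTranspose_self N).eigenvalues
      finrank_euclideanSpace_fin i.rev := by
  obtain ⟨hσ0, hσmono, hchar⟩ := hσ
  have hanti : Antitone fun j : Fin p => σ j.rev ^ 2 := fun a b hab =>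
    pow_le_pow_left₀ (hσ0 _) (hσmono (Fin.rev_le_rev.mpr hab)) 2
  have hchar' :
      (toEuclideanLin (N * Nᴴ)).charpoly = ∏ j : Fin p, (X - C ((σ j.rev ^ 2 : ℝ) : ℂ)) := by
    rw [toEuclideanLin_eq_toLin_orthonormal, charpoly_toLin, hchar,
      ← Equiv.prod_comp Fin.revPerm]
    push_cast
    rfl
  rw [LinearMap.IsSymmetric.eigenvalues_eq_of_charpoly_eq _ _ hanti hchar']
  simp only [Fin.rev_rev]

/-- Each singular value of a `p × q` submatrix of `M` is bounded by the corresponding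
singular value of `M`: `σ i ≤ m (n - p + i)`. -/
theorem submatrix_singular_values_le {n p q : ℕ} (hpq : p ≤ q) (hqn : q ≤ n)
    (M : Matrix (Fin n) (Fin n) ℂ) (m : Fin n → ℝ) (hm : IsSingularValues M m)
    (r : Fin p → Fin n) (c : Fin q → Fin n) (hr : StrictMono r) (hc : StrictMono c)
    (σ : Fin p → ℝ) (hσ : IsSingularValuesRect (M.submatrix r c) σ) :
    ∀ i : Fin p, σ i ≤ m ⟨n - p + (i : ℕ), by omega⟩ := by
  intro i
  have hle := (isSymmetric_toEuclideanLin_mul_conjTranspose_self M).eigenvalues_le_of_re_inner_le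
    finrank_euclideanSpace_fin (isSymmetric_toEuclideanLin_mul_conjTranspose_self _)
    finrank_euclideanSpace_fin (hpq.trans hqn) (EuclideanSpace.extendByZero hr.injective)
    (re_inner_submatrix_mul_conjTranspose_le M hr.injective hc.injective) i.rev
  have hidx : i.rev.castLE (hpq.trans hqn) = (⟨n - p + (i : ℕ), by omega⟩ : Fin n).rev :=
    Fin.ext (by simp only [Fin.val_castLE, Fin.val_rev]; omega)
  rw [hidx, ← hσ.sq_eq_eigenvalues_rev, ← hm.isSingularValuesRect.sq_eq_eigenvalues_rev] at hle
  exact (pow_le_pow_iff_left₀ (hσ.1 i) (hm.1 _) two_ne_zero).mp hle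
end

section
/- Let U be a 3×3 unitary matrix. Then there exists a permutation of its columns such that, after the permutation, |U_{33}| ≥ 1/√3 and |U_{22}U_{33} − U_{23}U_{32}| ≥ 1/√6. -/
/-!
Rows and columns are numbered 1, 2, 3 here (Lean's `0, 1, 2`). Row 3 of `U` has unit norm, so some
`|U₃ⱼ|² ≥ 1/3`; column `j` has unit norm, so `|U₁ⱼ|² ≤ 2/3` and the other two entries of row 1
carry weight at least `1/3`, whence `|U₁ₖ|² ≥ 1/6` for some `k ≠ j`. Permute the columns so that
`j` lands in position 3 and `k` in position 1. For a unitary `V` the adjugate is `det V • Vᴴ` with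
`|det V| = 1`, so the lower-right `2 × 2` minor of `V` has modulus `|V₁₁|`.
-/

open Matrix Finset

theorem Finset.exists_div_card_le_of_le_sum {ι : Type*} {s : Finset ι} {f : ι → ℝ} {c : ℝ}
    (hs : s.Nonempty) (h : c ≤ ∑ i ∈ s, f i) : ∃ i ∈ s, c / #s ≤ f i :=
  exists_le_of_sum_le hs <| by
    rwa [sum_const, nsmul_eq_mul, mul_div_cancel₀ _ (Nat.cast_ne_zero.2 hs.card_pos.ne')]

theorem exists_ne_inv_card_le_of_sum_eq_one {ι : Type*} [Fintype ι] [DecidableEq ι]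
    {a b : ι → ℝ} (ha : ∑ i, a i = 1) (hb : ∑ i, b i = 1) (hab : ∀ i, a i + b i ≤ 1) :
    ∃ j k, j ≠ k ∧ 1 / Fintype.card ι ≤ a j ∧
      1 / Fintype.card ι / (Fintype.card ι - 1) ≤ b k := by
  have hne : (univ : Finset ι).Nonempty := nonempty_of_sum_ne_zero (ha ▸ one_ne_zero)
  obtain ⟨j, -, hj⟩ := exists_div_card_le_of_le_sum hne ha.ge
  rw [card_univ] at hj
  have hrest : a j ≤ ∑ k ∈ univ.erase j, b k := by
    rw [sum_erase_eq_sub (mem_univ j), hb]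
    linarith [hab j]
  have hcard : 0 < Fintype.card ι := Fintype.card_pos_iff.2 ⟨j⟩
  have hpos : 0 < a j := (one_div_pos.2 (Nat.cast_pos.2 hcard)).trans_le hj
  obtain ⟨k, hk, hbk⟩ :=
    exists_div_card_le_of_le_sum (nonempty_of_sum_ne_zero (f := b) (by linarith)) (hj.trans hrest)
  refine ⟨j, k, (ne_of_mem_erase hk).symm, hj, ?_⟩
  rwa [card_erase_of_mem (mem_univ j), card_univ, Nat.cast_sub hcard, Nat.cast_one] at hbk

theorem Equiv.Perm.exists_apply_eq_and_apply_eq {α : Type*} [DecidableEq α] {a b j k : α}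
    (hab : a ≠ b) (hjk : j ≠ k) : ∃ σ : Equiv.Perm α, σ a = j ∧ σ b = k := by
  set τ := Equiv.swap a j
  have hτb : τ b ≠ j := by
    rw [← Equiv.swap_apply_left a j]; exact τ.injective.ne hab.symm
  refine ⟨Equiv.swap (τ b) k * τ, ?_, Equiv.swap_apply_left _ _⟩
  rw [Equiv.Perm.mul_apply, Equiv.swap_apply_left, Equiv.swap_apply_of_ne_of_ne hτb.symm hjk]

namespace Matrix

variable {n : Type*} [Fintype n] [DecidableEq n]

theorem submatrix_mem_unitaryGroup {α : Type*} [CommRing α] [StarRing α] {A : Matrix n n α}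
    (hA : A ∈ unitaryGroup n α) (e₁ e₂ : Equiv.Perm n) :
    A.submatrix e₁ e₂ ∈ unitaryGroup n α := by
  rw [mem_unitaryGroup_iff', star_eq_conjTranspose, conjTranspose_submatrix, submatrix_mul_equiv,
    ← star_eq_conjTranspose, mem_unitaryGroup_iff'.mp hA, submatrix_one_equiv]

theorem adjugate_of_mem_unitaryGroup {α : Type*} [CommRing α] [StarRing α] {A : Matrix n n α}
    (hA : A ∈ unitaryGroup n α) : adjugate A = A.det • star A := by
  calc adjugate A = star A * A * adjugate A := by rw [mem_unitaryGroup_iff'.mp hA, one_mul]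
    _ = A.det • star A := by rw [Matrix.mul_assoc, mul_adjugate, Matrix.mul_smul, Matrix.mul_one]

variable {𝕜 : Type*} [RCLike 𝕜] {A : Matrix n n 𝕜}

theorem norm_adjugate_apply_of_mem_unitaryGroup (hA : A ∈ unitaryGroup n 𝕜) (i j : n) :
    ‖adjugate A i j‖ = ‖A j i‖ := by
  have hdet : ‖A.det‖ = 1 := CStarRing.norm_of_mem_unitary (det_of_mem_unitary hA)
  rw [adjugate_of_mem_unitaryGroup hA, smul_apply, smul_eq_mul, norm_mul, hdet, one_mul,
    star_apply, norm_star]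

theorem sum_norm_sq_row_of_mem_unitaryGroup (hA : A ∈ unitaryGroup n 𝕜) (i : n) :
    ∑ j, ‖A i j‖ ^ 2 = 1 := by
  have := congr_fun₂ (mem_unitaryGroup_iff.mp hA) i i
  simp only [mul_apply, star_apply, one_apply_eq, RCLike.star_def, RCLike.mul_conj] at this
  exact_mod_cast this

theorem sum_norm_sq_col_of_mem_unitaryGroup (hA : A ∈ unitaryGroup n 𝕜) (j : n) :
    ∑ i, ‖A i j‖ ^ 2 = 1 := by
  simpa only [star_apply, norm_star] using
    sum_norm_sq_row_of_mem_unitaryGroup (Unitary.star_mem hA) j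

theorem norm_minor_zero_zero_of_mem_unitaryGroup {A : Matrix (Fin 3) (Fin 3) 𝕜}
    (hA : A ∈ unitaryGroup (Fin 3) 𝕜) : ‖A 1 1 * A 2 2 - A 1 2 * A 2 1‖ = ‖A 0 0‖ := by
  simpa [adjugate_fin_three] using norm_adjugate_apply_of_mem_unitaryGroup hA 0 0

end Matrix

theorem Real.one_div_sqrt_le_of_one_div_le_sq {c x : ℝ} (hx : 0 ≤ x) (h : 1 / c ≤ x ^ 2) :
    1 / √c ≤ x := by
  rw [one_div, ← Real.sqrt_inv, ← Real.sqrt_sq hx, ← one_div]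
  exact Real.sqrt_le_sqrt h

/-- Ordering lemma for unitary matrices: the columns of a `3 × 3` unitary matrix can be
permuted so that `|U 3 3| ≥ 1/√3` and `|U 2 2 * U 3 3 - U 2 3 * U 3 2| ≥ 1/√6`. -/
theorem unitary_ordering_lemma (U : Matrix (Fin 3) (Fin 3) ℂ) (hU : Uᴴ * U = 1) :
    ∃ σ : Equiv.Perm (Fin 3),
      (1 / Real.sqrt 3 ≤ ‖(U.submatrix id σ) 2 2‖) ∧
      (1 / Real.sqrt 6 ≤ ‖
        ((U.submatrix id σ) 1 1 * (U.submatrix id σ) 2 2 -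
         (U.submatrix id σ) 1 2 * (U.submatrix id σ) 2 1)‖) := by
  have hU' : U ∈ unitaryGroup (Fin 3) ℂ := mem_unitaryGroup_iff'.mpr hU
  have hcol (j : Fin 3) : ‖U 2 j‖ ^ 2 + ‖U 0 j‖ ^ 2 ≤ 1 := by
    rw [← sum_norm_sq_col_of_mem_unitaryGroup hU' j, Fin.sum_univ_three]
    linarith [sq_nonneg ‖U 1 j‖]
  obtain ⟨j, k, hjk, hj, hk⟩ := exists_ne_inv_card_le_of_sum_eq_one
    (sum_norm_sq_row_of_mem_unitaryGroup hU' 2) (sum_norm_sq_row_of_mem_unitaryGroup hU' 0) hcol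
  norm_num at hj hk
  obtain ⟨σ, hσ2, hσ0⟩ := Equiv.Perm.exists_apply_eq_and_apply_eq (by decide : (2 : Fin 3) ≠ 0) hjk
  have hV : U.submatrix id σ ∈ unitaryGroup (Fin 3) ℂ :=
    submatrix_mem_unitaryGroup hU' (Equiv.refl _) σ
  refine ⟨σ, ?_, ?_⟩
  · rw [submatrix_apply, hσ2]
    exact Real.one_div_sqrt_le_of_one_div_le_sq (norm_nonneg _) hj
  · rw [norm_minor_zero_zero_of_mem_unitaryGroup hV, submatrix_apply, hσ0]
    exact Real.one_div_sqrt_le_of_one_div_le_sq (norm_nonneg _) hk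
end

section
/- Let M be a complex 3×3 matrix with singular values m_1 ≤ m_2 ≤ m_3. Then there exist row indices i < j and column indices h < k such that the 2×2 submatrix satisfies |M_{ih}M_{jk} − M_{ik}M_{jh}| ≥ m_2 m_3 / 3. -/
open Matrix

/-!
The adjugate of `M` lists its nine `2 × 2` minors up to sign, and
`adj (Mᴴ M) = adj M * (adj M)ᴴ`. For a `3 × 3` matrix the linear coefficient of the characteristic
polynomial is the trace of the adjugate, so comparing linear coefficients in the definition of the
singular values gives `∑ |minor|² = m₀²m₁² + m₀²m₂² + m₁²m₂² ≥ m₁²m₂²`. Hence one of the nine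
minors has `|minor|² ≥ m₁²m₂² / 9`.
-/

open Polynomial

namespace Matrix

theorem charpoly_fin_three {R : Type*} [CommRing R] (A : Matrix (Fin 3) (Fin 3) R) :
    A.charpoly = X ^ 3 - C A.trace * X ^ 2 + C A.adjugate.trace * X - C A.det := by
  simp only [charpoly, det_fin_three, charmatrix_apply_eq, ne_eq, Fin.reduceEq, not_false_eq_true,
    charmatrix_apply_ne, trace_fin_three, adjugate_fin_three, of_apply, cons_val', cons_val_zero,
    cons_val_fin_one, cons_val_one, cons_val, map_add, map_sub, map_mul]
  ring

theorem charpoly_coeff_one_fin_three {R : Type*} [CommRing R] (A : Matrix (Fin 3) (Fin 3) R) :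
    A.charpoly.coeff 1 = A.adjugate.trace := by
  simp [charpoly_fin_three, coeff_C, coeff_X_pow]

theorem trace_mul_conjTranspose_self_eq_sum_norm_sq {𝕜 m n : Type*} [RCLike 𝕜]
    [Fintype m] [Fintype n] (A : Matrix m n 𝕜) :
    (A * Aᴴ).trace = ((∑ i, ∑ j, ‖A i j‖ ^ 2 : ℝ) : 𝕜) := by
  simp [trace, mul_apply, RCLike.mul_conj]

theorem trace_adjugate_conjTranspose_mul_self {𝕜 n : Type*} [RCLike 𝕜] [Fintype n]
    [DecidableEq n] (M : Matrix n n 𝕜) :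
    (Mᴴ * M).adjugate.trace = ((∑ i, ∑ j, ‖M.adjugate i j‖ ^ 2 : ℝ) : 𝕜) := by
  rw [adjugate_mul_distrib, ← adjugate_conjTranspose, trace_mul_conjTranspose_self_eq_sum_norm_sq]

theorem exists_norm_adjugate_apply_eq_norm_minor {𝕜 : Type*} [NormedField 𝕜]
    (M : Matrix (Fin 3) (Fin 3) 𝕜) (a b : Fin 3) :
    ∃ i j h k : Fin 3, i < j ∧ h < k ∧ ‖M.adjugate a b‖ = ‖M i h * M j k - M i k * M j h‖ :=
  ⟨b.succAbove 0, b.succAbove 1, a.succAbove 0, a.succAbove 1,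
    Fin.strictMono_succAbove _ zero_lt_one, Fin.strictMono_succAbove _ zero_lt_one,
    by simp [adjugate_fin_succ_eq_det_submatrix, det_fin_two]⟩

end Matrix

theorem Polynomial.coeff_one_prod_X_sub_C_fin_three {R : Type*} [CommRing R] (a : Fin 3 → R) :
    (∏ i, (X - C (a i))).coeff 1 = a 0 * a 1 + a 0 * a 2 + a 1 * a 2 := by
  simp only [Fin.prod_univ_three, mul_sub, sub_mul, X_mul_C, coeff_sub, coeff_mul_X, mul_coeff_zero,
    coeff_X, coeff_C, coeff_mul_C, one_ne_zero, if_false, if_true]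
  ring

theorem IsSingularValues.sum_norm_sq_adjugate {M : Matrix (Fin 3) (Fin 3) ℂ} {m : Fin 3 → ℝ}
    (hm : IsSingularValues M m) :
    ∑ i, ∑ j, ‖M.adjugate i j‖ ^ 2 = m 0 ^ 2 * m 1 ^ 2 + m 0 ^ 2 * m 2 ^ 2 + m 1 ^ 2 * m 2 ^ 2 := by
  have h := congrArg (coeff · 1) hm.2.2
  simp only [charpoly_coeff_one_fin_three, trace_adjugate_conjTranspose_mul_self,
    coeff_one_prod_X_sub_C_fin_three, RCLike.ofReal_eq_complex_ofReal] at h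
  exact_mod_cast h

/-- Some `2 × 2` subdeterminant of a `3 × 3` matrix is at least `m₂ m₃ / 3`. -/
theorem exists_large_two_by_two_subdet (M : Matrix (Fin 3) (Fin 3) ℂ) (m : Fin 3 → ℝ)
    (hm : IsSingularValues M m) :
    ∃ i j h k : Fin 3, i < j ∧ h < k ∧
      m 1 * m 2 / 3 ≤ ‖M i h * M j k - M i k * M j h‖ := by
  have hsum : ∑ _p : Fin 3 × Fin 3, (m 1 * m 2 / 3) ^ 2 ≤
      ∑ p : Fin 3 × Fin 3, ‖M.adjugate p.1 p.2‖ ^ 2 := by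
    simp only [Fintype.sum_prod_type, hm.sum_norm_sq_adjugate, Finset.sum_const, Finset.card_univ,
      Fintype.card_prod, Fintype.card_fin, nsmul_eq_mul, Nat.cast_mul, Nat.cast_ofNat]
    nlinarith [sq_nonneg (m 0 * m 1), sq_nonneg (m 0 * m 2)]
  obtain ⟨⟨a, b⟩, -, hab⟩ := Finset.exists_le_of_sum_le Finset.univ_nonempty hsum
  obtain ⟨i, j, h, k, hij, hhk, hminor⟩ := M.exists_norm_adjugate_apply_eq_norm_minor a b
  exact ⟨i, j, h, k, hij, hhk, hminor ▸ le_of_sq_le_sq hab (norm_nonneg _)⟩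
end
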